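/- Let F(E) := 1/(1 + e^E) (the OFTRL response function of the negative entropy regularizer), let L := 1/2 (which is a Lipschitz constant of F), and let c1 := 1/2 − F(1/(20L)) = 1/2 − 1/(1 + e^{1/10}) > 0. Then, with c3 := 1/2, there exist constants δ', c2 > 0 such that for every 0 < δ ≤ δ' and every E ∈ ℝ: (1) if F(E) ≥ 1/(1+δ) then F(E − c1²/(30Lδ)) ≥ (1+c3)/(1+c3+δ); and (2) if F(E) ≥ 1/(2(1+δ)) then F(E − c3·c1²/(120L) + δ/(4L)) ≥ 1/2 + c2. -/

import Mathlib

open Set Real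

/-- The OFTRL response function of the negative entropy regularizer: `F(E) = 1/(1+e^E)`. -/
noncomputable def Fent (E : ℝ) : ℝ := 1 / (1 + Real.exp E)

/-- The Lipschitz constant `L = 1/2` of `Fent`. -/
noncomputable def Lent : ℝ := 1 / 2

/-- `c1 = 1/2 − F(1/(20L))`. -/
noncomputable def c1ent : ℝ := 1 / 2 - Fent (1 / (20 * Lent))

/-- `c3 = 1/2`. -/
noncomputable def c3ent : ℝ := 1 / 2

/-! `F(E) = σ(-E)` for the logistic sigmoid `σ`, whose derivative `σ(1 - σ)` is at most `1/4`.
A lower bound `p ≤ F(E)` is the upper bound `e^E ≤ 1/p - 1`. Under the hypothesis of (1) this reads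
`e^E ≤ δ`, and shifting `E` by `s ≥ 1` multiplies `e^E` by `e^{-s} ≤ 1/e < 1/(1 + c3)`, which is what
the conclusion of (1) asks. Under the hypothesis of (2) it reads `e^E ≤ 1 + 2δ`, so `E ≤ 2δ`; for
small `δ` the shifted argument in (2) is then at most `-c1²/240`, and `F` is decreasing with
`F(0) = 1/2`, so (2) holds with `c2 = F(-c1²/240) - 1/2`. -/

lemma Fent_eq_sigmoid_neg (E : ℝ) : Fent E = sigmoid (-E) := by
  rw [Fent, sigmoid_def, neg_neg, one_div]

lemma Fent_zero : Fent 0 = 1 / 2 := by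
  norm_num [Fent]

lemma Fent_strictAnti : StrictAnti Fent := fun a b hab => by
  simpa only [Fent_eq_sigmoid_neg] using sigmoid_lt (neg_lt_neg hab)

lemma lipschitzWith_sigmoid : LipschitzWith 4⁻¹ sigmoid := by
  refine lipschitzWith_of_nnnorm_deriv_le differentiable_sigmoid fun x => ?_
  have h0 := sigmoid_pos x
  have h1 := sigmoid_lt_one x
  rw [← NNReal.coe_le_coe, coe_nnnorm, deriv_sigmoid, Real.norm_eq_abs,
    abs_of_pos (by nlinarith), NNReal.coe_inv, NNReal.coe_ofNat]
  nlinarith [sq_nonneg (sigmoid x - 1 / 2)]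

lemma lipschitzWith_Fent : LipschitzWith 4⁻¹ Fent := by
  have h : Fent = sigmoid ∘ Neg.neg := funext Fent_eq_sigmoid_neg
  simpa [h] using lipschitzWith_sigmoid.comp isometry_neg.lipschitz

lemma abs_Fent_sub_le (a b : ℝ) : |Fent a - Fent b| ≤ Lent * |a - b| :=
  calc |Fent a - Fent b| ≤ 4⁻¹ * |a - b| := by
        simpa [Real.dist_eq] using lipschitzWith_Fent.dist_le_mul a b
    _ ≤ Lent * |a - b| := by rw [Lent]; gcongr; norm_num

lemma le_Fent_iff {p E : ℝ} (hp : 0 < p) : p ≤ Fent E ↔ exp E ≤ p⁻¹ - 1 := by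
  rw [Fent, le_div_iff₀ (by positivity), ← le_div_iff₀' hp, one_div]
  constructor <;> intro h <;> linarith

lemma le_of_le_Fent {p E : ℝ} (hp : 0 < p) (h : p ≤ Fent E) : E ≤ p⁻¹ - 2 := by
  linarith [(le_Fent_iff hp).1 h, add_one_le_exp E]

lemma le_Fent_sub_of_le_Fent {c δ s E : ℝ} (hc : 0 < c) (hδ : 0 < δ)
    (hs : (1 + c) * exp (-s) ≤ 1) (h : 1 / (1 + δ) ≤ Fent E) :
    (1 + c) / (1 + c + δ) ≤ Fent (E - s) := by
  have hE : exp E ≤ δ := by simpa using (le_Fent_iff (by positivity)).1 h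
  rw [le_Fent_iff (by positivity), inv_div, sub_eq_add_neg, exp_add,
    show (1 + c + δ) / (1 + c) - 1 = δ / (1 + c) by field_simp; ring, le_div_iff₀ (by positivity)]
  calc exp E * exp (-s) * (1 + c) ≤ δ * ((1 + c) * exp (-s)) := by
        rw [mul_assoc, mul_comm (exp (-s))]; gcongr
    _ ≤ δ := mul_le_of_le_one_right hδ.le hs

lemma c1ent_eq : c1ent = 1 / 2 - 1 / (1 + exp (1 / 10)) := by
  norm_num [c1ent, Fent, Lent]

lemma c1ent_pos : 0 < c1ent := by
  rw [c1ent, sub_pos, ← Fent_zero]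
  exact Fent_strictAnti (by norm_num [Lent])

/-- the main assumption holds for the negative entropy regularizer:
`L = 1/2` is a Lipschitz constant of `F`, `c1 = 1/2 − 1/(1+e^{1/10}) > 0`, and with
`c3 = 1/2` there are `δ', c2 > 0` making items (1) and (2) hold. -/
theorem negEnt_main_assumption :
    (∀ a b : ℝ, |Fent a - Fent b| ≤ Lent * |a - b|) ∧
    c1ent = 1 / 2 - 1 / (1 + Real.exp (1 / 10)) ∧
    0 < c1ent ∧
    ∃ δ' c2 : ℝ, 0 < δ' ∧ 0 < c2 ∧
      ∀ δ : ℝ, 0 < δ → δ ≤ δ' → ∀ E : ℝ,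
        (1 / (1 + δ) ≤ Fent E →
          (1 + c3ent) / (1 + c3ent + δ) ≤ Fent (E - c1ent ^ 2 / (30 * Lent * δ))) ∧
        (1 / (2 * (1 + δ)) ≤ Fent E →
          1 / 2 + c2 ≤ Fent (E - c3ent * c1ent ^ 2 / (120 * Lent) + δ / (4 * Lent))) := by
  have hc1 := c1ent_pos
  -- `δ' = c1²/600` makes the shift in (1) at least `1`, and the argument in (2) at most `-c1²/240`.
  refine ⟨abs_Fent_sub_le, c1ent_eq, hc1, c1ent ^ 2 / 600, Fent (-(c1ent ^ 2 / 240)) - 1 / 2,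
    by positivity, ?_, fun δ hδ hδ' E => ⟨fun h => ?_, fun h => ?_⟩⟩
  · rw [sub_pos, ← Fent_zero]
    exact Fent_strictAnti (by simp only [Left.neg_neg_iff]; positivity)
  · refine le_Fent_sub_of_le_Fent (by norm_num [c3ent]) hδ ?_ h
    have hs : 1 ≤ c1ent ^ 2 / (30 * Lent * δ) := by
      rw [Lent, le_div_iff₀ (by positivity)]
      linarith
    calc (1 + c3ent) * exp (-(c1ent ^ 2 / (30 * Lent * δ))) ≤ (1 + c3ent) * (exp 1)⁻¹ := by
          rw [← exp_neg]; gcongr; norm_num [c3ent]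
      _ ≤ 1 := by
          rw [c3ent, ← div_eq_mul_inv, div_le_one (exp_pos 1)]
          linarith [exp_one_gt_two]
  · have hE : E ≤ 2 * δ := by
      have := le_of_le_Fent (by positivity) h
      rwa [one_div, inv_inv, show 2 * (1 + δ) - 2 = 2 * δ by ring] at this
    suffices Fent (-(c1ent ^ 2 / 240)) ≤
        Fent (E - c3ent * c1ent ^ 2 / (120 * Lent) + δ / (4 * Lent)) by linarith
    refine Fent_strictAnti.antitone ?_
    rw [c3ent, Lent]
    linarith
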